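/- arXiv:2001.02220 — 5 statements merged into one kernel-verified Lean document; each statement's English description precedes it below -/
import Mathlib

section
/- Let p and q be distinct odd primes with p, q ≡ 3 (mod 8), and let x be a primitive root modulo p. Then -1 does not lie in the cyclic subgroup of the units of Z/(pq)Z generated by x^2 (where x is viewed modulo pq, assuming x is a unit mod pq). -/
theorem ZMod.not_isSquare_neg_one_of_prime_dvd {p n : ℕ} [Fact p.Prime] (hp : p % 4 = 3)
    (hd : p ∣ n) : ¬IsSquare (-1 : ZMod n) := fun hs =>
  ZMod.exists_sq_eq_neg_one_iff.mp (ZMod.isSquare_neg_one_of_dvd hd hs) hp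

theorem neg_one_not_in_square_powers_general (p q : ℕ) (hp : p.Prime) (hp8 : p % 8 = 3) (x : ℕ) :
    ¬∃ n : ℕ, ((x : ZMod (p * q)) ^ 2) ^ n = -1 := by
  have := Fact.mk hp
  rintro ⟨n, hn⟩
  have hsq : IsSquare (-1 : ZMod (p * q)) := hn ▸ (IsSquare.sq _).pow n
  exact ZMod.not_isSquare_neg_one_of_prime_dvd (by omega) (dvd_mul_right p q) hsq

theorem neg_one_not_in_square_powers (p q : ℕ) (hp : p.Prime) (hq : q.Prime)
    (hne : p ≠ q) (hp8 : p % 8 = 3) (hq8 : q % 8 = 3) (x : ℕ)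
    (hcop : Nat.Coprime x (p * q))
    (hroot : ∀ y : ZMod p, y ≠ 0 → ∃ n : ℕ, (x : ZMod p) ^ n = y) :
    ¬∃ n : ℕ, ((x : ZMod (p * q)) ^ 2) ^ n = -1 :=
  neg_one_not_in_square_powers_general p q hp hp8 x
end

section
/- Let p and q be distinct odd primes with p, q ≡ 3 (mod 8), and let x be an integer that is a primitive root modulo p and coprime to pq. Then 2 does not lie in the cyclic subgroup of the units of Z/(pq)Z generated by x^2. -/
/-! Reducing modulo `p`, an element of `⟨x ^ 2⟩` is a square in `ZMod p`, while `2` is not a square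
modulo a prime `p ≡ 3 (mod 8)`. -/

theorem ZMod.not_isSquare_two_of_mod_eight_eq_three {p : ℕ} [Fact p.Prime] (hp8 : p % 8 = 3) :
    ¬IsSquare (2 : ZMod p) := by
  rw [ZMod.exists_sq_eq_two_iff (by omega)]
  omega

theorem ZMod.not_isSquare_of_dvd {m n : ℕ} (hmn : m ∣ n) {a : ℕ} (ha : ¬IsSquare (a : ZMod m)) :
    ¬IsSquare (a : ZMod n) := fun hsq =>
  ha (by simpa only [map_natCast] using hsq.map (ZMod.castHom hmn (ZMod m)))

theorem two_not_in_square_powers_general (p q : ℕ) (hp : p.Prime) (hp8 : p % 8 = 3) (x : ℕ) :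
    ¬∃ n : ℕ, ((x : ZMod (p * q)) ^ 2) ^ n = 2 := by
  have := Fact.mk hp
  rintro ⟨n, hn⟩
  have hsq : IsSquare ((2 : ℕ) : ZMod (p * q)) := by
    rw [Nat.cast_ofNat, ← hn]
    exact (IsSquare.sq _).pow n
  exact ZMod.not_isSquare_of_dvd (dvd_mul_right p q)
    (by exact_mod_cast ZMod.not_isSquare_two_of_mod_eight_eq_three hp8) hsq

theorem two_not_in_square_powers (p q : ℕ) (hp : p.Prime) (hq : q.Prime)
    (hne : p ≠ q) (hp8 : p % 8 = 3) (hq8 : q % 8 = 3) (x : ℕ)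
    (hcop : Nat.Coprime x (p * q))
    (hroot : ∀ y : ZMod p, y ≠ 0 → ∃ n : ℕ, (x : ZMod p) ^ n = y) :
    ¬∃ n : ℕ, ((x : ZMod (p * q)) ^ 2) ^ n = 2 :=
  two_not_in_square_powers_general p q hp hp8 x
end

section
/- Let p ≡ 3 (mod 4) be an odd prime with p ≠ 3, and let β be a non-quadratic residue modulo p with β ≠ -1. Then the set S_β = { {x, βx} : x ∈ QR(p) } is a strong starter for Z/pZ; that is: (1) the elements x and βx for x ∈ QR(p) are pairwise distinct and together give all nonzero residues; (2) the differences ±(βx - x) for x ∈ QR(p) give all nonzero residues; (3) the sums x + βx for x ∈ QR(p) are nonzero and pairwise distinct. -/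
/-!
Write `χ` for the quadratic character of `ZMod p` and `Q = {χ = 1} = QR(p)`. For `a ≠ 0` the
dilate `a • Q` is the level set `{χ = χ a}`, and the level sets `{χ = ε}`, `{χ = -ε}` with
`ε = ±1` partition the nonzero residues. Part (1) is this partition for `Q` and `β • Q`, as
`χ β = -1`. Part (2) is the partition for `(β - 1) • Q` and `-(β - 1) • Q`, as `χ (-1) = -1`
for `p ≡ 3 (mod 4)`. Part (3) holds because `x + βx = (1 + β) x` with `1 + β ≠ 0`.
-/

/-- The set of quadratic residues modulo `p`: nonzero squares in `ZMod p`. -/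
def QRset (p : ℕ) : Set (ZMod p) := {x | x ≠ 0 ∧ ∃ y : ZMod p, y ≠ 0 ∧ y ^ 2 = x}

section QuadraticChar

variable {F : Type*} [Field F] [Fintype F] [DecidableEq F]

theorem image_mul_setOf_quadraticChar_eq_one {a : F} (ha : a ≠ 0) :
    (fun x => a * x) '' {x | quadraticChar F x = 1} =
      {z | quadraticChar F z = quadraticChar F a} := by
  ext z
  constructor
  · rintro ⟨x, hx, rfl⟩
    rw [Set.mem_ofPred_eq, map_mul, hx.out, mul_one]
  · intro hz
    refine ⟨a⁻¹ * z, ?_, mul_inv_cancel_left₀ ha z⟩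
    rw [Set.mem_ofPred_eq, map_mul, hz.out, ← map_mul, inv_mul_cancel₀ ha, map_one]

theorem setOf_quadraticChar_eq_inter_eq_neg {a : F} (ha : a ≠ 0) :
    {z | quadraticChar F z = quadraticChar F a} ∩ {z | quadraticChar F z = -quadraticChar F a}
      = ∅ := by
  have hχa : quadraticChar F a ≠ 0 := mt quadraticChar_eq_zero_iff.mp ha
  ext z
  simp only [Set.mem_inter_iff, Set.mem_ofPred_eq, Set.mem_empty_iff_false, iff_false]
  rintro ⟨h₁, h₂⟩
  omega

theorem setOf_quadraticChar_eq_union_eq_neg {a : F} (ha : a ≠ 0) :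
    {z | quadraticChar F z = quadraticChar F a} ∪ {z | quadraticChar F z = -quadraticChar F a}
      = {z | z ≠ 0} := by
  ext z
  simp only [Set.mem_union, Set.mem_ofPred_eq]
  constructor
  · rintro (h | h) rfl <;>
    · rcases quadraticChar_dichotomy ha with hχa | hχa <;> simp_all
  · intro hz
    rcases quadraticChar_dichotomy ha with hχa | hχa <;>
    rcases quadraticChar_dichotomy hz with hχz | hχz <;> simp_all

theorem image_mul_setOf_quadraticChar_eq_one_partition {a b : F} (ha : a ≠ 0)
    (hab : quadraticChar F b = -quadraticChar F a) :
    (fun x => a * x) '' {x | quadraticChar F x = 1} ∩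
        (fun x => b * x) '' {x | quadraticChar F x = 1} = ∅ ∧
      (fun x => a * x) '' {x | quadraticChar F x = 1} ∪
        (fun x => b * x) '' {x | quadraticChar F x = 1} = {z | z ≠ 0} := by
  have hb : b ≠ 0 := by
    rintro rfl
    rw [quadraticChar_zero, zero_eq_neg, quadraticChar_eq_zero_iff] at hab
    exact ha hab
  rw [image_mul_setOf_quadraticChar_eq_one ha, image_mul_setOf_quadraticChar_eq_one hb, hab]
  exact ⟨setOf_quadraticChar_eq_inter_eq_neg ha, setOf_quadraticChar_eq_union_eq_neg ha⟩

end QuadraticChar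

theorem QRset_eq_setOf_quadraticChar {p : ℕ} [Fact p.Prime] :
    QRset p = {x | quadraticChar (ZMod p) x = 1} := by
  ext a
  by_cases ha : a = 0
  · simp [QRset, ha]
  · rw [Set.mem_ofPred_eq, quadraticChar_one_iff_isSquare ha]
    refine ⟨fun ⟨_, y, _, hy⟩ => ⟨y, hy ▸ sq y⟩,
      fun ⟨y, hy⟩ => ⟨ha, y, ?_, hy ▸ sq y⟩⟩
    rintro rfl
    exact ha (by simpa using hy)

theorem ZMod.quadraticChar_neg_one_of_mod_four_eq_three {p : ℕ} [Fact p.Prime]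
    (hp4 : p % 4 = 3) : quadraticChar (ZMod p) (-1) = -1 := by
  rw [quadraticChar_neg_one_iff_not_isSquare, ZMod.exists_sq_eq_neg_one_iff]
  exact not_not.mpr hp4

theorem S_beta_strong_starter_general (p : ℕ) (hp : p.Prime) (hp4 : p % 4 = 3)
    (β : ZMod p) (hβ0 : β ≠ 0) (hβnqr : ¬∃ y : ZMod p, y ≠ 0 ∧ y ^ 2 = β)
    (hβ1 : β ≠ -1) :
    -- (1) the elements x and βx for x ∈ QR(p) are pairwise distinct
    --     and together give all nonzero residues
    (QRset p ∩ ((fun x => β * x) '' QRset p) = ∅ ∧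
     QRset p ∪ ((fun x => β * x) '' QRset p) = {z : ZMod p | z ≠ 0}) ∧
    -- (2) the differences ±(βx - x) for x ∈ QR(p) give all nonzero residues
    (((fun x => β * x - x) '' QRset p) ∩ ((fun x => -(β * x - x)) '' QRset p) = ∅ ∧
     ((fun x => β * x - x) '' QRset p) ∪ ((fun x => -(β * x - x)) '' QRset p)
        = {z : ZMod p | z ≠ 0}) ∧
    -- (3) the sums x + βx are nonzero and pairwise distinct
    ((∀ x ∈ QRset p, x + β * x ≠ 0) ∧ Set.InjOn (fun x => x + β * x) (QRset p)) := by
  have : Fact p.Prime := ⟨hp⟩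
  have hβQ : β ∉ QRset p := fun h => hβnqr h.2
  rw [QRset_eq_setOf_quadraticChar] at hβQ
  have hχβ : quadraticChar (ZMod p) β = -1 :=
    (quadraticChar_eq_neg_one_iff_not_one hβ0).mpr hβQ
  have hβ_sub : β - 1 ≠ 0 := sub_ne_zero.mpr fun h => by simp [h] at hχβ
  have hβ_add : 1 + β ≠ 0 := fun h => hβ1 (eq_neg_of_add_eq_zero_right h)
  refine ⟨?_, ?_, ?_⟩
  · have h := image_mul_setOf_quadraticChar_eq_one_partition one_ne_zero (b := β)
      (by rw [hχβ, map_one])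
    simp only [one_mul, Set.image_id'] at h
    rwa [QRset_eq_setOf_quadraticChar]
  · have hdiff : (fun x => β * x - x) = fun x => (β - 1) * x := by funext x; ring
    have hdiff' : (fun x => -(β * x - x)) = fun x => -(β - 1) * x := by funext x; ring
    rw [hdiff, hdiff', QRset_eq_setOf_quadraticChar]
    refine image_mul_setOf_quadraticChar_eq_one_partition hβ_sub ?_
    rw [neg_eq_neg_one_mul, map_mul, ZMod.quadraticChar_neg_one_of_mod_four_eq_three hp4,
      neg_one_mul]
  · have hsum : (fun x => x + β * x) = fun x => (1 + β) * x := by funext x; ring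
    refine ⟨fun x hx => ?_, hsum ▸ (mul_right_injective₀ hβ_add).injOn⟩
    rw [show x + β * x = (1 + β) * x by ring]
    exact mul_ne_zero hβ_add hx.1

theorem S_beta_strong_starter (p : ℕ) (hp : p.Prime) (hp4 : p % 4 = 3) (hp3 : p ≠ 3)
    (β : ZMod p) (hβ0 : β ≠ 0) (hβnqr : ¬∃ y : ZMod p, y ≠ 0 ∧ y ^ 2 = β)
    (hβ1 : β ≠ -1) :
    -- (1) the elements x and βx for x ∈ QR(p) are pairwise distinct
    --     and together give all nonzero residues
    (QRset p ∩ ((fun x => β * x) '' QRset p) = ∅ ∧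
     QRset p ∪ ((fun x => β * x) '' QRset p) = {z : ZMod p | z ≠ 0}) ∧
    -- (2) the differences ±(βx - x) for x ∈ QR(p) give all nonzero residues
    (((fun x => β * x - x) '' QRset p) ∩ ((fun x => -(β * x - x)) '' QRset p) = ∅ ∧
     ((fun x => β * x - x) '' QRset p) ∪ ((fun x => -(β * x - x)) '' QRset p)
        = {z : ZMod p | z ≠ 0}) ∧
    -- (3) the sums x + βx are nonzero and pairwise distinct
    ((∀ x ∈ QRset p, x + β * x ≠ 0) ∧ Set.InjOn (fun x => x + β * x) (QRset p)) :=
  S_beta_strong_starter_general p hp hp4 β hβ0 hβnqr hβ1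
end

section
/- Let p ≡ 3 (mod 8) be an odd prime. Then the strong starter S_2 = { {x, 2x} : x ∈ QR(p) } for Z/pZ is a Skolem starter: it can be written as pairs {x_i, y_i}, i = 1,...,(p-1)/2, with representatives chosen so that y_i > x_i (in the ordering 1 < 2 < ... < p-1 of residues) and y_i - x_i ≡ i (mod p). -/
/-- The "gap" of the pair `{z, c*z}`: the difference between the natural
representatives (in `{0,…,p-1}`) of its larger and smaller element. -/
def pairGap (p : ℕ) (c z : ZMod p) : ℕ :=
  max z.val (c * z).val - min z.val (c * z).val

/-!
The gap of `{x, 2x}` is `min x.val (p - x.val)`, the absolute value of the least absolute residue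
of `x`: if `2 * x.val < p` then `(2x).val = 2 * x.val`, otherwise `(2x).val = 2 * x.val - p` lies
below `x.val`. Hence the pairs of gap `d` are those with `x = ±d`, and since `-1` is a nonsquare
for `p ≡ 3 (mod 4)`, exactly one of `d`, `-d` is a quadratic residue.
-/

lemma mem_QRset_iff {p : ℕ} {x : ZMod p} : x ∈ QRset p ↔ x ≠ 0 ∧ IsSquare x := by
  constructor
  · rintro ⟨hx, y, -, rfl⟩
    exact ⟨hx, y, sq y⟩
  · rintro ⟨hx, y, rfl⟩
    exact ⟨hx, y, by rintro rfl; simp at hx, sq y⟩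

lemma pairGap_two_eq_natAbs_valMinAbs {n : ℕ} [NeZero n] (x : ZMod n) :
    pairGap n 2 x = x.valMinAbs.natAbs := by
  rw [ZMod.valMinAbs_natAbs_eq_min, pairGap, two_mul]
  rcases lt_or_ge (x.val + x.val) n with h | h
  · rw [ZMod.val_add_of_lt h]
    omega
  · rw [ZMod.val_add_of_le h]
    have := x.val_lt
    omega

lemma natAbs_valMinAbs_eq_iff {n d : ℕ} (x : ZMod n) (hd : d ≤ n / 2) :
    x.valMinAbs.natAbs = d ↔ x = d ∨ x = -d := by
  rw [← ZMod.natAbs_valMinAbs_eq_natAbs_valMinAbs, ZMod.valMinAbs_natCast_of_le_half hd,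
    Int.natAbs_natCast]

lemma FiniteField.isSquare_neg_iff_not_isSquare {F : Type*} [Field F] [Fintype F] [DecidableEq F]
    (hF : Fintype.card F % 4 = 3) {a : F} (ha : a ≠ 0) : IsSquare (-a) ↔ ¬IsSquare a := by
  have hneg_one : quadraticChar F (-1) = -1 :=
    quadraticChar_neg_one_iff_not_isSquare.2 fun h ↦ FiniteField.isSquare_neg_one_iff.1 h hF
  rw [← quadraticChar_one_iff_isSquare (neg_ne_zero.2 ha), ← quadraticChar_neg_one_iff_not_isSquare,
    neg_eq_neg_one_mul, map_mul, hneg_one, neg_one_mul, neg_eq_iff_eq_neg]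

lemma existsUnique_mem_QRset_eq_or_eq_neg {p : ℕ} [Fact p.Prime] (hp : p % 4 = 3) {a : ZMod p}
    (ha : a ≠ 0) : ∃! x, x ∈ QRset p ∧ (x = a ∨ x = -a) := by
  have hsq := FiniteField.isSquare_neg_iff_not_isSquare (by rwa [ZMod.card]) ha
  by_cases h : IsSquare a
  · refine ⟨a, ⟨mem_QRset_iff.2 ⟨ha, h⟩, .inl rfl⟩, ?_⟩
    rintro x ⟨hx, rfl | rfl⟩
    · rfl
    · exact absurd h (hsq.1 (mem_QRset_iff.1 hx).2)
  · refine ⟨-a, ⟨mem_QRset_iff.2 ⟨neg_ne_zero.2 ha, hsq.2 h⟩, .inr rfl⟩, ?_⟩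
    rintro x ⟨hx, rfl | rfl⟩
    · exact absurd (mem_QRset_iff.1 hx).2 h
    · rfl

/-- The strong starter `S_2 = {{x, 2x} : x ∈ QR(p)}` is Skolem: for each
`d ∈ {1,…,(p-1)/2}` there is exactly one pair whose larger element minus its
smaller element (as residues in `{1,…,p-1}`) equals `d`. -/
theorem S_two_skolem (p : ℕ) (hp : p.Prime) (hp8 : p % 8 = 3) :
    ∀ d : ℕ, 1 ≤ d → d ≤ (p - 1) / 2 →
      ∃! x : ZMod p, x ∈ QRset p ∧ pairGap p 2 x = d := by
  intro d hd1 hd2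
  have : Fact p.Prime := ⟨hp⟩
  have hd0 : (d : ZMod p) ≠ 0 := by
    rw [Ne, ZMod.natCast_eq_zero_iff]
    exact Nat.not_dvd_of_pos_of_lt hd1 (by omega)
  simp_rw [pairGap_two_eq_natAbs_valMinAbs, natAbs_valMinAbs_eq_iff _ (show d ≤ p / 2 by omega)]
  exact existsUnique_mem_QRset_eq_or_eq_neg (by omega) hd0
end

section
/- Let n = 2k+1. If Z/nZ admits a Skolem starter, then n ≡ 1 or 3 (mod 8). -/
/-- `ZMod n`, with `n = 2k+1` odd, admits a Skolem starter: there are pairs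
`{x_i, x_i + i}` for `i = 1,…,k` (encoded by `x : Fin k → ZMod n`) such that
* (Skolem) `(x i + (i+1)).val = (x i).val + (i+1)`, i.e. in each pair the larger
  residue minus the smaller one equals its index;
* (starter) the `2k` pair elements are pairwise distinct and nonzero, hence they
  partition the nonzero residues, while the differences `±(i+1)` cover all
  nonzero residues. -/
def HasSkolemStarter (n : ℕ) : Prop :=
  ∃ k : ℕ, n = 2 * k + 1 ∧ ∃ x : Fin k → ZMod n,
    (∀ i : Fin k, (x i + ((i : ℕ) + 1 : ℕ)).val = (x i).val + ((i : ℕ) + 1)) ∧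
    Function.Injective (fun j : Fin k × Bool =>
      if j.2 then x j.1 + ((j.1 : ℕ) + 1 : ℕ) else x j.1) ∧
    (∀ i : Fin k, x i ≠ 0) ∧
    (∀ i : Fin k, x i + ((i : ℕ) + 1 : ℕ) ≠ 0)

theorem skolem_starter_necessity (n k : ℕ) (hn : n = 2 * k + 1)
    (h : HasSkolemStarter n) : n % 8 = 1 ∨ n % 8 = 3 := by
  obtain ⟨k', hn', x, hsk, hinj, hx0, hy0⟩ := h
  have hk : k = k' := by omega
  subst hk
  subst hn
  haveI : NeZero (2 * k + 1) := ⟨by omega⟩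
  set f : Fin k × Bool → ZMod (2 * k + 1) :=
    fun j => if j.2 then x j.1 + ((j.1 : ℕ) + 1 : ℕ) else x j.1 with hf
  have himg : Finset.image f Finset.univ = Finset.univ.erase 0 := by
    apply Finset.eq_of_subset_of_card_le
    · intro a ha
      simp only [Finset.mem_image, Finset.mem_univ, true_and] at ha
      obtain ⟨p, rfl⟩ := ha
      simp only [Finset.mem_erase, Finset.mem_univ, and_true]
      rcases p with ⟨i, b⟩
      cases b
      · simpa [hf] using hx0 i
      · simpa [hf] using hy0 i
    · rw [Finset.card_image_of_injective _ hinj]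
      simp [Finset.card_erase_of_mem, ZMod.card]
      omega
  have hsum1 : ∑ p : Fin k × Bool, (f p).val
      = ∑ a ∈ Finset.univ.erase (0 : ZMod (2*k+1)), a.val := by
    rw [← himg]
    exact (Finset.sum_image (g := f) (f := ZMod.val) (fun a _ b _ hab => hinj hab)).symm
  have hsum2 : ∑ a ∈ Finset.univ.erase (0 : ZMod (2*k+1)), a.val
      = ∑ a : ZMod (2*k+1), a.val :=
    Finset.sum_erase _ (by simp)
  have hsum3 : ∑ a : ZMod (2*k+1), a.val = ∑ i ∈ Finset.range (2*k+1), i := by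
    show ∑ a : Fin (2*k+1), a.val = _
    exact Fin.sum_univ_eq_sum_range (fun i => i) _
  have hL : ∑ p : Fin k × Bool, (f p).val
      = 2 * (∑ i : Fin k, (x i).val) + ∑ i : Fin k, ((i : ℕ) + 1) := by
    rw [Fintype.sum_prod_type]
    have : ∀ i : Fin k, (∑ b : Bool, (f (i, b)).val)
        = 2 * (x i).val + ((i : ℕ) + 1) := by
      intro i
      rw [Fintype.sum_bool]
      simp only [hf]
      simp only [if_true, if_neg Bool.false_ne_true]
      rw [hsk i]
      ring
    rw [Finset.sum_congr rfl fun i _ => this i]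
    rw [Finset.sum_add_distrib, Finset.mul_sum]
  set S := ∑ i : Fin k, (x i).val with hS
  have hT : 2 * (∑ i : Fin k, ((i : ℕ) + 1)) = k * k + k := by
    have h1 : (∑ i : Fin k, ((i : ℕ) + 1)) = ∑ i ∈ Finset.range k, (i + 1) :=
      Fin.sum_univ_eq_sum_range _ _
    have h2 : ∑ i ∈ Finset.range (k+1), i = (∑ i ∈ Finset.range k, (i+1)) + 0 :=
      Finset.sum_range_succ' _ _
    have h3 := Finset.sum_range_id_mul_two (k+1)
    rw [Nat.add_sub_cancel] at h3
    have h4 : (k+1) * k = k * k + k := by ring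
    rw [h1]
    omega
  have hG := Finset.sum_range_id_mul_two (2*k+1)
  rw [Nat.add_sub_cancel] at hG
  set T := ∑ i : Fin k, ((i : ℕ) + 1) with hTdef
  have key : 2 * S + T = ∑ i ∈ Finset.range (2*k+1), i := by
    rw [← hsum3, ← hsum2, ← hsum1, hL]
  have hm : k * k % 4 = (k % 4) * (k % 4) % 4 := by
    conv_lhs => rw [Nat.mul_mod]
  have h4 : k % 4 = 0 ∨ k % 4 = 1 ∨ k % 4 = 2 ∨ k % 4 = 3 := by omega
  have hkk : (2*k+1) * (2*k) = 4 * (k*k) + 2*k := by ring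
  rcases h4 with h | h | h | h <;> rw [h] at hm <;> omega
end
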